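/- Let ξ : [a,b] → ℝ^d be continuously differentiable, let Q ≥ 0 satisfy |ξ'(θ) − ξ'(θ')| ≤ Q for all θ, θ' ∈ [a,b], and let τ* ∈ [a,b] be a point minimizing τ ↦ |ξ(τ)| over [a,b]. Then for every τ ∈ [a,b], |ξ(τ)| ≥ |τ − τ*| · (|ξ'(τ*)| − Q). -/

import Mathlib

/-!
Write `τ = τs + c`. Up to an error `Q |c|` (mean value inequality applied to `ξ - t • ξ' τs`),
`ξ τ` is the tangent-line value `ξ τs + c • ξ' τs`. Since `τs` minimizes `‖ξ‖²` on the interval,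
the first-order condition gives `0 ≤ c ⟪ξ τs, ξ' τs⟫`, so the two terms of the tangent-line
value are not opposed and its norm is at least `|c| ‖ξ' τs‖`.
-/

open InnerProductSpace

theorem Convex.norm_image_sub_sub_smul_le {E : Type*} [NormedAddCommGroup E] [NormedSpace ℝ E]
    {f f' : ℝ → E} {s : Set ℝ} {C x y : ℝ} (hs : Convex ℝ s)
    (hf : ∀ t ∈ s, HasDerivWithinAt f (f' t) s t) (bound : ∀ t ∈ s, ‖f' t - f' x‖ ≤ C)
    (hx : x ∈ s) (hy : y ∈ s) :
    ‖f y - f x - (y - x) • f' x‖ ≤ C * |y - x| := by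
  have hg : ∀ t ∈ s, HasDerivWithinAt (fun t ↦ f t - t • f' x) (f' t - f' x) s t := fun t ht ↦
    ((hf t ht).sub ((hasDerivWithinAt_id t s).smul_const (f' x))).congr_deriv (by rw [one_smul])
  have key := hs.norm_image_sub_le_of_norm_hasDerivWithin_le hg bound hx hy
  rwa [Real.norm_eq_abs, show f y - y • f' x - (f x - x • f' x) = f y - f x - (y - x) • f' x by
    rw [sub_smul]; abel] at key

theorem Convex.mul_inner_deriv_nonneg_of_isMinOn_norm {F : Type*} [NormedAddCommGroup F]
    [InnerProductSpace ℝ F] {f : ℝ → F} {f' : F} {s : Set ℝ} {x y : ℝ} (hs : Convex ℝ s)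
    (hf : HasDerivWithinAt f f' s x) (hmin : IsMinOn (‖f ·‖) s x) (hx : x ∈ s) (hy : y ∈ s) :
    0 ≤ (y - x) * ⟪f x, f'⟫_ℝ := by
  have hmin_sq : IsLocalMinOn (‖f ·‖ ^ 2) s x :=
    IsMinOn.localize fun t ht ↦ pow_le_pow_left₀ (norm_nonneg _) (hmin ht) 2
  have hcone : y - x ∈ posTangentConeAt s x :=
    sub_mem_posTangentConeAt_of_segment_subset (hs.segment_subset hx hy)
  have key := hmin_sq.hasFDerivWithinAt_nonneg hf.norm_sq.hasFDerivWithinAt hcone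
  rw [ContinuousLinearMap.toSpanSingleton_apply, smul_eq_mul] at key
  linarith

theorem mul_norm_le_norm_add_smul_of_nonneg_mul_inner {F : Type*} [NormedAddCommGroup F]
    [InnerProductSpace ℝ F] {u v : F} {c : ℝ} (h : 0 ≤ c * ⟪u, v⟫_ℝ) :
    |c| * ‖v‖ ≤ ‖u + c • v‖ := by
  refine le_of_pow_le_pow_left₀ two_ne_zero (norm_nonneg _) ?_
  rw [norm_add_sq_real, real_inner_smul_right, norm_smul, Real.norm_eq_abs, mul_pow, sq_abs]
  nlinarith [sq_nonneg ‖u‖]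

theorem characteristic_lower_bound_general (d : ℕ) (a b Q : ℝ)
    (ξ ξ' : ℝ → EuclideanSpace ℝ (Fin d))
    (hderiv : ∀ t ∈ Set.Icc a b, HasDerivAt ξ (ξ' t) t)
    (hosc : ∀ θ ∈ Set.Icc a b, ∀ θ' ∈ Set.Icc a b, ‖ξ' θ - ξ' θ'‖ ≤ Q)
    (τs : ℝ) (hτs : τs ∈ Set.Icc a b)
    (hmin : ∀ τ ∈ Set.Icc a b, ‖ξ τs‖ ≤ ‖ξ τ‖) :
    ∀ τ ∈ Set.Icc a b, |τ - τs| * (‖ξ' τs‖ - Q) ≤ ‖ξ τ‖ := by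
  intro τ hτ
  have taylor := (convex_Icc a b).norm_image_sub_sub_smul_le
    (fun t ht ↦ (hderiv t ht).hasDerivWithinAt) (fun t ht ↦ hosc t ht τs hτs) hτs hτ
  have sign := (convex_Icc a b).mul_inner_deriv_nonneg_of_isMinOn_norm
    (hderiv τs hτs).hasDerivWithinAt (isMinOn_iff.2 hmin) hτs hτ
  have tangent := mul_norm_le_norm_add_smul_of_nonneg_mul_inner sign
  have triangle := norm_sub_le (ξ τ) (ξ τ - ξ τs - (τ - τs) • ξ' τs)
  rw [show ξ τ - (ξ τ - ξ τs - (τ - τs) • ξ' τs) = ξ τs + (τ - τs) • ξ' τs by abel] at triangle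
  linarith

theorem characteristic_lower_bound (d : ℕ) (a b Q : ℝ) (hab : a ≤ b)
    (ξ ξ' : ℝ → EuclideanSpace ℝ (Fin d))
    (hderiv : ∀ t ∈ Set.Icc a b, HasDerivAt ξ (ξ' t) t)
    (hcont : ContinuousOn ξ' (Set.Icc a b))
    (hQ : 0 ≤ Q)
    (hosc : ∀ θ ∈ Set.Icc a b, ∀ θ' ∈ Set.Icc a b, ‖ξ' θ - ξ' θ'‖ ≤ Q)
    (τs : ℝ) (hτs : τs ∈ Set.Icc a b)
    (hmin : ∀ τ ∈ Set.Icc a b, ‖ξ τs‖ ≤ ‖ξ τ‖) :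
    ∀ τ ∈ Set.Icc a b, |τ - τs| * (‖ξ' τs‖ - Q) ≤ ‖ξ τ‖ :=
  characteristic_lower_bound_general d a b Q ξ ξ' hderiv hosc τs hτs hmin
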